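/- For every positive integer n, the map d_{com,A}^{(n)} is order-reversing on partitions of a fixed integer N: if 𝔮 ≤ 𝔮′ in the dominance order, then d_{com,A}^{(n)}(𝔮) ≥ d_{com,A}^{(n)}(𝔮′). -/

import Mathlib

noncomputable section
open scoped Classical

namespace PaperStmt

/-- The parts of a partition (multiset of naturals) sorted in non-increasing order. -/
def sortDesc (p : Multiset ℕ) : List ℕ := (p.sort (· ≤ ·)).reverse

/-- Partial sum of the first `k` entries of a list. -/
def psum (l : List ℕ) (k : ℕ) : ℕ := (l.take k).sum

/-- Dominance order on partitions of the same integer. -/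
def Dom (p q : Multiset ℕ) : Prop :=
  p.sum = q.sum ∧ ∀ k, psum (sortDesc p) k ≤ psum (sortDesc q) k

/-- A partition: a multiset of positive parts. -/
def IsPartition (p : Multiset ℕ) : Prop := 0 ∉ p

/-- Type B: partition of an odd integer, every even part with even multiplicity. -/
def typeB (p : Multiset ℕ) : Prop := Odd p.sum ∧ ∀ v ≠ 0, Even v → Even (p.count v)

/-- Type C: partition of an even integer, every odd part with even multiplicity. -/
def typeC (p : Multiset ℕ) : Prop := Even p.sum ∧ ∀ v, Odd v → Even (p.count v)

/-- Type D: partition of an even integer, every even part with even multiplicity. -/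
def typeD (p : Multiset ℕ) : Prop := Even p.sum ∧ ∀ v ≠ 0, Even v → Even (p.count v)

/-- `q` is the `X`-collapse of `p`: the largest partition of type `X` below `p`
in dominance order. -/
def IsCollapse (X : Multiset ℕ → Prop) (p q : Multiset ℕ) : Prop :=
  X q ∧ Dom q p ∧ ∀ q', X q' → Dom q' p → Dom q' q

def collapse (X : Multiset ℕ → Prop) (p : Multiset ℕ) : Multiset ℕ :=
  if h : ∃ q, IsCollapse X p q then h.choose else 0

def collapseB : Multiset ℕ → Multiset ℕ := collapse typeB
def collapseC : Multiset ℕ → Multiset ℕ := collapse typeC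
def collapseD : Multiset ℕ → Multiset ℕ := collapse typeD

/-- The largest part. -/
def maxPart (p : Multiset ℕ) : ℕ := (sortDesc p).headI

/-- The smallest (positive) part. -/
def minPart (p : Multiset ℕ) : ℕ := (sortDesc p).getLastD 0

/-- `p⁺`: add 1 to the largest part. -/
def pplus (p : Multiset ℕ) : Multiset ℕ := (maxPart p + 1) ::ₘ p.erase (maxPart p)

/-- `p⁻`: subtract 1 from the smallest part, dropping a resulting zero. -/
def pminus (p : Multiset ℕ) : Multiset ℕ :=
  Multiset.filter (0 < ·) ((minPart p - 1) ::ₘ p.erase (minPart p))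

/-- `p⁺⁻`: add 1 to the largest part and subtract 1 from the smallest part. -/
def pmOp (p : Multiset ℕ) : Multiset ℕ := pminus (pplus p)

def zipSum : List ℕ → List ℕ → List ℕ
  | [], l => l
  | a :: as, [] => a :: as
  | a :: as, b :: bs => (a + b) :: zipSum as bs

/-- Coordinatewise sum of two partitions. -/
def addP (p q : Multiset ℕ) : Multiset ℕ := (zipSum (sortDesc p) (sortDesc q) : List ℕ)

/-- Double every part of a partition. -/
def doubleP (p : Multiset ℕ) : Multiset ℕ := p.map (fun v => 2 * v)

/-- The partition `𝔰(m; n) = (n^a, b)` where `m = n a + b`, `0 ≤ b < n`. -/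
def sMn (m n : ℕ) : Multiset ℕ :=
  Multiset.replicate (m / n) n + (if m % n = 0 then 0 else {m % n})

/-- The duality `d_{com,A}^{(n)}`: coordinatewise sum of the `𝔰(pᵢ; n)`. -/
def dcomA (n : ℕ) (p : Multiset ℕ) : Multiset ℕ :=
  (sortDesc p).foldr (fun q acc => addP (sMn q n) acc) 0

/-- Transpose (conjugate) of a partition: the `j`-th part is `#{i : pᵢ ≥ j}`. -/
def transposeP (p : Multiset ℕ) : Multiset ℕ :=
  Multiset.filter (0 < ·)
    ((Multiset.range (maxPart p)).map (fun j => (p.filter (fun v => j + 1 ≤ v)).card))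

/-! Sorting `𝔰(m; n)` decreasingly gives `(n, …, n, m % n)`, whose first `k` parts sum to
`min m (k n)`. Coordinatewise addition adds partial sums, so the first `k` parts of
`d_{com,A}^{(n)}(𝔮)` sum to `∑ᵢ min(qᵢ, k n)`. As `min x c = x - (x - c)` and the two partitions
have the same size, it remains to see that `∑ᵢ (qᵢ - c)⁺` grows along the dominance order: for a
decreasing list it is the maximum over `t` of `q₁ + ⋯ + q_t - t c`, attained at
`t = #{i : qᵢ > c}`, and each of these expressions grows along the dominance order. -/

lemma coe_sortDesc (p : Multiset ℕ) : (sortDesc p : Multiset ℕ) = p := by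
  simp [sortDesc, Multiset.sort_eq]

lemma pairwise_sortDesc (p : Multiset ℕ) : (sortDesc p).Pairwise (· ≥ ·) :=
  List.pairwise_reverse.mpr (Multiset.pairwise_sort p _)

lemma sortDesc_coe {l : List ℕ} (hl : l.Pairwise (· ≥ ·)) : sortDesc l = l := by
  have hsort : Multiset.sort (l : Multiset ℕ) (· ≤ ·) = l.reverse :=
    List.Perm.eq_of_pairwise' (Multiset.pairwise_sort _ _) (List.pairwise_reverse.mpr hl)
      (Multiset.coe_eq_coe.mp (by rw [Multiset.sort_eq, Multiset.coe_reverse]))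
  simp [sortDesc, hsort]

lemma psum_cons (a : ℕ) (l : List ℕ) (k : ℕ) : psum (a :: l) (k + 1) = a + psum l k := by
  simp [psum]

lemma le_add_of_mem_zipSum {a b : ℕ} : ∀ {as bs : List ℕ}, (∀ x ∈ as, x ≤ a) →
    (∀ y ∈ bs, y ≤ b) → ∀ z ∈ zipSum as bs, z ≤ a + b
  | [], _, _, hb, z, hz => (hb z hz).trans (Nat.le_add_left b a)
  | _ :: _, [], ha, _, z, hz => (ha z hz).trans (Nat.le_add_right a b)
  | x :: as, y :: bs, ha, hb, z, hz => by
    simp only [List.forall_mem_cons] at ha hb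
    rcases List.mem_cons.mp hz with rfl | hz
    · exact Nat.add_le_add ha.1 hb.1
    · exact le_add_of_mem_zipSum ha.2 hb.2 z hz

lemma pairwise_zipSum : ∀ {as bs : List ℕ}, as.Pairwise (· ≥ ·) → bs.Pairwise (· ≥ ·) →
    (zipSum as bs).Pairwise (· ≥ ·)
  | [], _, _, hb => hb
  | _ :: _, [], ha, _ => ha
  | _ :: _, _ :: _, ha, hb => by
    rw [List.pairwise_cons] at ha hb
    exact List.pairwise_cons.mpr
      ⟨le_add_of_mem_zipSum ha.1 hb.1, pairwise_zipSum ha.2 hb.2⟩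

lemma sum_zipSum : ∀ as bs : List ℕ, (zipSum as bs).sum = as.sum + bs.sum
  | [], _ => by simp [zipSum]
  | _ :: _, [] => by simp [zipSum]
  | a :: as, b :: bs => by simp [zipSum, sum_zipSum as bs]; omega

lemma psum_zipSum : ∀ (as bs : List ℕ) (k : ℕ), psum (zipSum as bs) k = psum as k + psum bs k
  | [], _, _ => by simp [zipSum, psum]
  | _ :: _, [], _ => by simp [zipSum, psum]
  | _ :: _, _ :: _, 0 => by simp [psum]
  | a :: as, b :: bs, k + 1 => by
    rw [zipSum, psum_cons, psum_cons, psum_cons, psum_zipSum as bs k]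
    omega

lemma sortDesc_addP (p q : Multiset ℕ) :
    sortDesc (addP p q) = zipSum (sortDesc p) (sortDesc q) :=
  sortDesc_coe (pairwise_zipSum (pairwise_sortDesc p) (pairwise_sortDesc q))

lemma sum_addP (p q : Multiset ℕ) : (addP p q).sum = p.sum + q.sum := by
  rw [addP, Multiset.sum_coe, sum_zipSum, ← Multiset.sum_coe, ← Multiset.sum_coe, coe_sortDesc,
    coe_sortDesc]

lemma sum_sMn (m n : ℕ) : (sMn m n).sum = m := by
  have := Nat.div_add_mod' m n
  by_cases h : m % n = 0 <;> simp [sMn, h] <;> omega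

lemma sortDesc_sMn (m n : ℕ) :
    sortDesc (sMn m n) = List.replicate (m / n) n ++ if m % n = 0 then [] else [m % n] := by
  have hcoe : ((List.replicate (m / n) n ++ if m % n = 0 then [] else [m % n] : List ℕ) :
      Multiset ℕ) = sMn m n := by
    split <;> simp [sMn, *, ← Multiset.coe_replicate, ← Multiset.coe_add]
  rw [← hcoe, sortDesc_coe]
  refine List.pairwise_append.mpr ⟨List.pairwise_replicate.mpr (Or.inr le_rfl), ?_, ?_⟩
  · split <;> simp
  · intro a ha b hb
    obtain ⟨hq, rfl⟩ := List.mem_replicate.mp ha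
    have hn : 0 < a := Nat.pos_of_ne_zero fun h => hq (by simp [h])
    split at hb <;> simp only [List.mem_singleton, List.not_mem_nil] at hb
    exact hb ▸ (Nat.mod_lt m hn).le

lemma psum_sortDesc_sMn {n : ℕ} (hn : 0 < n) (m k : ℕ) :
    psum (sortDesc (sMn m n)) k = min m (k * n) := by
  have hm := Nat.div_add_mod' m n
  have hmod := Nat.mod_lt m hn
  rw [sortDesc_sMn, psum]
  rcases le_or_gt k (m / n) with hk | hk
  · have hkn : k * n ≤ m / n * n := Nat.mul_le_mul_right n hk
    rw [List.take_append_of_le_length (by simpa using hk), List.take_replicate,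
      min_eq_left hk, List.sum_replicate, smul_eq_mul, min_eq_right (by omega)]
  · have hkn : (m / n + 1) * n ≤ k * n := Nat.mul_le_mul_right n hk
    rw [add_mul, one_mul] at hkn
    rw [List.take_of_length_le (by split <;> simp <;> omega), min_eq_left (by omega)]
    split <;> simp <;> omega

lemma sum_dcomA (n : ℕ) (p : Multiset ℕ) : (dcomA n p).sum = p.sum := by
  conv_rhs => rw [← coe_sortDesc p]
  rw [dcomA, Multiset.sum_coe]
  induction sortDesc p with
  | nil => rfl
  | cons q l ih => rw [List.foldr_cons, sum_addP, sum_sMn, ih, List.sum_cons]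

lemma psum_sortDesc_dcomA {n : ℕ} (hn : 0 < n) (p : Multiset ℕ) (k : ℕ) :
    psum (sortDesc (dcomA n p)) k = (p.map (min · (k * n))).sum := by
  conv_rhs => rw [← coe_sortDesc p]
  rw [dcomA, Multiset.map_coe, Multiset.sum_coe]
  induction sortDesc p with
  | nil => simp [psum, sortDesc]
  | cons q l ih =>
    rw [List.foldr_cons, sortDesc_addP, psum_zipSum, psum_sortDesc_sMn hn, ih, List.map_cons,
      List.sum_cons]

lemma psum_le_sum_map_tsub_add (c : ℕ) : ∀ (l : List ℕ) (t : ℕ),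
    psum l t ≤ (l.map (· - c)).sum + t * c
  | [], _ => by simp [psum]
  | _ :: _, 0 => by simp [psum]
  | a :: l, t + 1 => by
    have := psum_le_sum_map_tsub_add c l t
    rw [psum_cons, List.map_cons, List.sum_cons, Nat.succ_mul]
    omega

lemma exists_psum_eq_sum_map_tsub_add (c : ℕ) : ∀ {l : List ℕ}, l.Pairwise (· ≥ ·) →
    ∃ t, (l.map (· - c)).sum + t * c = psum l t
  | [], _ => ⟨0, by simp [psum]⟩
  | a :: l, hl => by
    rw [List.pairwise_cons] at hl
    by_cases hca : c < a
    · obtain ⟨t, ht⟩ := exists_psum_eq_sum_map_tsub_add c hl.2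
      refine ⟨t + 1, ?_⟩
      rw [psum_cons, List.map_cons, List.sum_cons, Nat.succ_mul, ← ht]
      omega
    · refine ⟨0, ?_⟩
      suffices ((a :: l).map (· - c)).sum = 0 by rw [this, zero_mul]; rfl
      refine List.sum_eq_zero fun y hy => ?_
      obtain ⟨x, hx, rfl⟩ := List.mem_map.mp hy
      rcases List.mem_cons.mp hx with rfl | hx
      · omega
      · have := hl.1 x hx
        omega

lemma sum_map_tsub_le_of_psum_le {p q : Multiset ℕ}
    (h : ∀ k, psum (sortDesc p) k ≤ psum (sortDesc q) k) (c : ℕ) :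
    (p.map (· - c)).sum ≤ (q.map (· - c)).sum := by
  rw [← coe_sortDesc p, ← coe_sortDesc q, Multiset.map_coe, Multiset.map_coe,
    Multiset.sum_coe, Multiset.sum_coe]
  obtain ⟨t, ht⟩ := exists_psum_eq_sum_map_tsub_add c (pairwise_sortDesc p)
  have := (h t).trans (psum_le_sum_map_tsub_add c (sortDesc q) t)
  omega

lemma sum_map_tsub_add_sum_map_min (s : Multiset ℕ) (c : ℕ) :
    (s.map (· - c)).sum + (s.map (min · c)).sum = s.sum := by
  rw [← Multiset.sum_map_add]
  simp [tsub_add_min]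

lemma Dom.sum_map_min_le {p q : Multiset ℕ} (h : Dom p q) (c : ℕ) :
    (q.map (min · c)).sum ≤ (p.map (min · c)).sum := by
  have hsum := h.1
  have htsub := sum_map_tsub_le_of_psum_le h.2 c
  have hp := sum_map_tsub_add_sum_map_min p c
  have hq := sum_map_tsub_add_sum_map_min q c
  omega

theorem dcomA_orderReversing_general (n : ℕ) (hn : 0 < n) (p q : Multiset ℕ) (h : Dom p q) :
    Dom (dcomA n q) (dcomA n p) := by
  refine ⟨by rw [sum_dcomA, sum_dcomA, h.1], fun k => ?_⟩
  rw [psum_sortDesc_dcomA hn, psum_sortDesc_dcomA hn]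
  exact h.sum_map_min_le (k * n)

/-- `d_{com,A}^{(n)}` is order-reversing for the dominance order. -/
theorem dcomA_orderReversing (n : ℕ) (hn : 0 < n) (p q : Multiset ℕ)
    (hp : IsPartition p) (hq : IsPartition q) (h : Dom p q) :
    Dom (dcomA n q) (dcomA n p) :=
  dcomA_orderReversing_general n hn p q h

end PaperStmt
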